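/- arXiv:1706.00453 — 2 statements merged into one kernel-verified Lean document; each statement's English description precedes it below -/
import Mathlib

section
/- Fix β₀ > 0 and α₀ ∈ ℝ and set γ₀ = α₀ − β₀. A complex number λ is an eigenvalue of the linearised operator K if and only if λ J₀(λ) = (γ₀ − β₀ λ²) J₁(λ). -/
/-!
Eliminating `ζ` and `ω`, an eigenvector is the same as a pair `(η, φ)`, not both zero, where `φ`
solves the Bessel equation `(r φ')' + λ² r φ = 0` regularly at `r = 0`, with boundary data
`φ'(1) = -λη` and `λ φ(1) = (γ₀ - β₀ λ²) η`. The Wronskian `r (φ' ψ - φ ψ')` of two regular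
solutions is constant and vanishes at `r = 0`; for `ψ(r) = J₀(λr)` it gives
`λ (η J₀(λ) - φ(1) J₁(λ)) = 0`, which combined with the boundary relation is the dispersion
relation times `η`. If `η = 0` and `λ ≠ 0`, then `φ` has zero Cauchy data at `r = 1` and vanishes by
uniqueness for the ODE. Conversely `φ(r) = J₀(λr)`, `η = J₁(λ)` is an eigenvector.
-/

open Filter Topology Set
open scoped Nat

noncomputable section

/-- The Bessel function of the first kind `J_n`, as a power series. -/
def besselJ (n : ℕ) (z : ℂ) : ℂ :=
  ∑' k : ℕ, (-1) ^ k * (z / 2) ^ (2 * k + n) / ((k ! : ℂ) * ((k + n)! : ℂ))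

/-- `λ` is an eigenvalue of the linearised operator `K` (parameters `β₀ > 0`,
`γ₀ = α₀ − β₀`): there is a nonzero quadruple `(η, ω, φ, ζ)` with `φ ∈ C²([0,1],ℂ)`,
`ζ ∈ C¹([0,1],ℂ)` satisfying the linearised equations and boundary conditions. -/
def IsEigenvalueK (β₀ γ₀ : ℝ) (lam : ℂ) : Prop :=
  ∃ (η ω : ℂ) (phi zeta : ℝ → ℂ),
    ContDiffOn ℝ 2 phi (Set.Icc 0 1) ∧
    ContDiffOn ℝ 1 zeta (Set.Icc 0 1) ∧
    (β₀ : ℂ)⁻¹ * (ω - ∫ r in (0:ℝ)..1, (r : ℂ) ^ 2 * derivWithin phi (Set.Icc 0 1) r)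
      = lam * η ∧
    (-2) * (∫ r in (0:ℝ)..1, (r : ℂ) * zeta r) + ((γ₀ : ℂ) - 2) * η = lam * ω ∧
    (∀ r ∈ Set.Icc (0:ℝ) 1, zeta r + 2 * η = lam * phi r) ∧
    (∀ r ∈ Set.Ioc (0:ℝ) 1,
      -(derivWithin (derivWithin phi (Set.Icc 0 1)) (Set.Icc 0 1) r)
        - (r : ℂ)⁻¹ * derivWithin phi (Set.Icc 0 1) r
        - 2 * (β₀ : ℂ)⁻¹ *
            (ω - ∫ r in (0:ℝ)..1, (r : ℂ) ^ 2 * derivWithin phi (Set.Icc 0 1) r)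
      = lam * zeta r) ∧
    derivWithin phi (Set.Icc 0 1) 0 = 0 ∧
    derivWithin phi (Set.Icc 0 1) 1
      + (β₀ : ℂ)⁻¹ * (ω - ∫ r in (0:ℝ)..1, (r : ℂ) ^ 2 * derivWithin phi (Set.Icc 0 1) r)
      = 0 ∧
    ¬(η = 0 ∧ ω = 0 ∧ (∀ r ∈ Set.Icc (0:ℝ) 1, phi r = 0) ∧
        (∀ r ∈ Set.Icc (0:ℝ) 1, zeta r = 0))

theorem hasDerivAt_tsum_of_summable_bound_on_balls {𝕜 F : Type*} [RCLike 𝕜] [NormedAddCommGroup F]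
    [NormedSpace 𝕜 F] [CompleteSpace F] {g g' : ℕ → 𝕜 → F}
    (hg : ∀ k w, HasDerivAt (g k) (g' k w) w)
    (hg' : ∀ R, ∃ u : ℕ → ℝ, Summable u ∧ ∀ k w, ‖w‖ ≤ R → ‖g' k w‖ ≤ u k)
    (hg0 : Summable fun k => g k 0) (z : 𝕜) :
    HasDerivAt (fun w => ∑' k, g k w) (∑' k, g' k z) z := by
  obtain ⟨u, hu, hgu⟩ := hg' (‖z‖ + 1)
  refine hasDerivAt_tsum_of_isPreconnected hu Metric.isOpen_ball
    (convex_ball 0 (‖z‖ + 1)).isPreconnected (fun k w _ => hg k w)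
    (fun k w hw => hgu k w ?_) (Metric.mem_ball_self (by positivity)) hg0 (by simp)
  simpa using (mem_ball_zero_iff.mp hw).le

namespace besselJ

def term (n k : ℕ) (z : ℂ) : ℂ := (-1) ^ k * (z / 2) ^ (2 * k + n) / ((k ! : ℂ) * ((k + n)! : ℂ))

theorem eq_tsum_term (n : ℕ) (z : ℂ) : besselJ n z = ∑' k, term n k z := rfl

theorem norm_term_le (n k : ℕ) {R : ℝ} {z : ℂ} (hz : ‖z‖ ≤ R) :
    ‖term n k z‖ ≤ (R / 2) ^ n * ((R / 2) ^ 2) ^ k / k ! := by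
  have hz2 : ‖z / 2‖ ≤ R / 2 := by
    rw [norm_div, Complex.norm_ofNat]; gcongr
  have hfac : (1 : ℝ) ≤ (k + n)! := by exact_mod_cast (k + n).factorial_pos
  calc ‖term n k z‖ = ‖z / 2‖ ^ (2 * k + n) / (k ! * (k + n)!) := by simp [term]
    _ ≤ ‖z / 2‖ ^ (2 * k + n) / k ! := by
        gcongr; exact le_mul_of_one_le_right (by positivity) hfac
    _ ≤ (R / 2) ^ (2 * k + n) / k ! := by gcongr
    _ = (R / 2) ^ n * ((R / 2) ^ 2) ^ k / k ! := by rw [pow_add, pow_mul]; ring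

theorem exists_summable_bound (n : ℕ) (R : ℝ) :
    ∃ u : ℕ → ℝ, Summable u ∧ ∀ k w, ‖w‖ ≤ R → ‖term n k w‖ ≤ u k :=
  ⟨_, by
    simpa only [mul_div_assoc] using (Real.summable_pow_div_factorial _).mul_left ((R / 2) ^ n),
    fun k _ hw => norm_term_le n k hw⟩

theorem summable_term (n : ℕ) (z : ℂ) : Summable fun k => term n k z := by
  obtain ⟨u, hu, hbound⟩ := exists_summable_bound n ‖z‖
  exact hu.of_norm_bounded fun k => hbound k z le_rfl

theorem hasDerivAt_term_zero_succ (k : ℕ) (z : ℂ) :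
    HasDerivAt (term 0 (k + 1)) (-term 1 k z) z := by
  have h := ((((hasDerivAt_id z).div_const 2).pow (2 * (k + 1) + 0)).const_mul
    ((-1 : ℂ) ^ (k + 1))).div_const (((k + 1)! : ℂ) * ((k + 1 + 0)! : ℂ))
  refine h.congr_deriv ?_
  simp only [term, id, Nat.factorial_succ, add_zero, Nat.cast_mul]
  push_cast
  rw [show 2 * (k + 1) - 1 = 2 * k + 1 by omega]
  field_simp
  ring

theorem hasDerivAt_mul_term_one (k : ℕ) (z : ℂ) :
    HasDerivAt (fun w => w * term 1 k w) (z * term 0 k z) z := by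
  have h := (hasDerivAt_id z).mul (((((hasDerivAt_id z).div_const 2).pow (2 * k + 1)).const_mul
    ((-1 : ℂ) ^ k)).div_const ((k ! : ℂ) * ((k + 1)! : ℂ)))
  refine h.congr_deriv ?_
  simp only [term, id, Pi.pow_apply, Nat.factorial_succ, Nat.cast_mul, Nat.add_sub_cancel,
    add_zero, pow_succ]
  push_cast
  field_simp
  ring

end besselJ

open besselJ

theorem hasDerivAt_besselJ_zero (z : ℂ) : HasDerivAt (besselJ 0) (-besselJ 1 z) z := by
  have hJ : besselJ 0 = fun w => 1 + ∑' k, term 0 (k + 1) w := funext fun w => by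
    rw [eq_tsum_term, (summable_term 0 w).tsum_eq_zero_add]
    simp [term]
  rw [hJ, eq_tsum_term, ← tsum_neg]
  refine (hasDerivAt_tsum_of_summable_bound_on_balls hasDerivAt_term_zero_succ (fun R => ?_)
    (by simp [term]) z).const_add 1
  obtain ⟨u, hu, hbound⟩ := exists_summable_bound 1 R
  exact ⟨u, hu, fun k w hw => by simpa using hbound k w hw⟩

theorem hasDerivAt_mul_besselJ_one (z : ℂ) :
    HasDerivAt (fun w => w * besselJ 1 w) (z * besselJ 0 z) z := by
  simp_rw [eq_tsum_term, ← tsum_mul_left]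
  refine hasDerivAt_tsum_of_summable_bound_on_balls hasDerivAt_mul_term_one (fun R => ?_)
    (by simp) z
  obtain ⟨u, hu, hbound⟩ := exists_summable_bound 0 R
  refine ⟨fun k => R * u k, hu.mul_left R, fun k w hw => ?_⟩
  rw [norm_mul]
  exact mul_le_mul hw (hbound k w hw) (norm_nonneg _) ((norm_nonneg _).trans hw)

theorem besselJ_zero_zero : besselJ 0 0 = 1 := by
  rw [eq_tsum_term, tsum_eq_single 0 fun k hk => by simp [term, hk]]
  simp [term]

theorem besselJ_one_zero : besselJ 1 0 = 0 := by
  simp [eq_tsum_term, term]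

theorem differentiable_besselJ_zero : Differentiable ℂ (besselJ 0) :=
  fun z => (hasDerivAt_besselJ_zero z).differentiableAt

theorem differentiable_besselJ_one : Differentiable ℂ (besselJ 1) := by
  have h : besselJ 1 = -deriv (besselJ 0) := funext fun z => by
    simp [(hasDerivAt_besselJ_zero z).deriv]
  rw [h]
  exact (differentiable_besselJ_zero.contDiff (n := 2)).differentiable_deriv_two.neg

theorem besselJ_one_add_mul_deriv (z : ℂ) :
    besselJ 1 z + z * deriv (besselJ 1) z = z * besselJ 0 z := by
  have h := (hasDerivAt_id z).mul (differentiable_besselJ_one z).hasDerivAt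
  simpa using h.unique (hasDerivAt_mul_besselJ_one z)

theorem hasDerivAt_besselJ_zero_const_mul (lam : ℂ) (r : ℝ) :
    HasDerivAt (fun s : ℝ => besselJ 0 (lam * s)) (-(lam * besselJ 1 (lam * r))) r := by
  have h := (hasDerivAt_besselJ_zero (lam * r)).comp (r : ℂ) ((hasDerivAt_id (r : ℂ)).const_mul lam)
  simpa [mul_comm] using h.comp_ofReal

theorem hasDerivAt_besselJ_one_const_mul (lam : ℂ) (r : ℝ) :
    HasDerivAt (fun s : ℝ => besselJ 1 (lam * s)) (deriv (besselJ 1) (lam * r) * lam) r := by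
  have h := (differentiable_besselJ_one (lam * r)).hasDerivAt.comp (r : ℂ)
    ((hasDerivAt_id (r : ℂ)).const_mul lam)
  simpa using h.comp_ofReal

theorem derivWithin_besselJ_zero_const_mul (lam : ℂ) {r : ℝ} (hr : r ∈ Icc (0:ℝ) 1) :
    derivWithin (fun s : ℝ => besselJ 0 (lam * s)) (Icc 0 1) r = -(lam * besselJ 1 (lam * r)) :=
  (hasDerivAt_besselJ_zero_const_mul lam r).hasDerivWithinAt.derivWithin
    (uniqueDiffOn_Icc one_pos r hr)

/-- `φ'' + φ'/r + λ² φ = 0` on `(0, 1]`, multiplied by `r`; at `r = 0` it says `φ'(0) = 0`. -/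
def IsRegularBesselSolution (lam : ℂ) (phi : ℝ → ℂ) : Prop :=
  ContDiffOn ℝ 2 phi (Icc 0 1) ∧
    ∀ r ∈ Icc (0:ℝ) 1, (r : ℂ) * derivWithin (derivWithin phi (Icc 0 1)) (Icc 0 1) r
      + derivWithin phi (Icc 0 1) r + lam ^ 2 * r * phi r = 0

theorem isRegularBesselSolution_besselJ_zero (lam : ℂ) :
    IsRegularBesselSolution lam (fun r => besselJ 0 (lam * r)) := by
  refine ⟨?_, fun r hr => ?_⟩
  · exact ((differentiable_besselJ_zero.contDiff.restrict_scalars ℝ).comp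
      (contDiff_const.mul Complex.ofRealCLM.contDiff)).contDiffOn
  have hdd : derivWithin (derivWithin (fun s : ℝ => besselJ 0 (lam * s)) (Icc 0 1)) (Icc 0 1) r
      = -(lam * (deriv (besselJ 1) (lam * r) * lam)) := by
    rw [derivWithin_congr (fun s hs => derivWithin_besselJ_zero_const_mul lam hs)
      (derivWithin_besselJ_zero_const_mul lam hr)]
    exact ((hasDerivAt_besselJ_one_const_mul lam r).const_mul lam).neg.hasDerivWithinAt.derivWithin
      (uniqueDiffOn_Icc one_pos r hr)
  rw [hdd, derivWithin_besselJ_zero_const_mul lam hr]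
  linear_combination (-lam) * besselJ_one_add_mul_deriv (lam * r)

namespace IsRegularBesselSolution

variable {lam : ℂ} {phi psi : ℝ → ℂ}

theorem hasDerivWithinAt (h : IsRegularBesselSolution lam phi) {r : ℝ} (hr : r ∈ Icc (0:ℝ) 1) :
    HasDerivWithinAt phi (derivWithin phi (Icc 0 1) r) (Icc 0 1) r :=
  (h.1.differentiableOn two_ne_zero r hr).hasDerivWithinAt

theorem contDiffOn_derivWithin (h : IsRegularBesselSolution lam phi) :
    ContDiffOn ℝ 1 (derivWithin phi (Icc 0 1)) (Icc 0 1) :=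
  h.1.derivWithin (uniqueDiffOn_Icc one_pos) (by norm_num)

theorem hasDerivWithinAt_derivWithin (h : IsRegularBesselSolution lam phi) {r : ℝ}
    (hr : r ∈ Icc (0:ℝ) 1) :
    HasDerivWithinAt (derivWithin phi (Icc 0 1))
      (derivWithin (derivWithin phi (Icc 0 1)) (Icc 0 1) r) (Icc 0 1) r :=
  (h.contDiffOn_derivWithin.differentiableOn one_ne_zero r hr).hasDerivWithinAt

theorem wronskian_eq_zero (hphi : IsRegularBesselSolution lam phi)
    (hpsi : IsRegularBesselSolution lam psi) :
    derivWithin phi (Icc 0 1) 1 * psi 1 - phi 1 * derivWithin psi (Icc 0 1) 1 = 0 := by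
  set W : ℝ → ℂ := fun r =>
    r * (derivWithin phi (Icc 0 1) r * psi r - phi r * derivWithin psi (Icc 0 1) r)
  have hW : ∀ r ∈ Icc (0:ℝ) 1, HasDerivWithinAt W 0 (Icc 0 1) r := fun r hr => by
    have h := (Complex.ofRealCLM.hasDerivAt (x := r)).hasDerivWithinAt.mul
      (((hphi.hasDerivWithinAt_derivWithin hr).mul (hpsi.hasDerivWithinAt hr)).sub
        ((hphi.hasDerivWithinAt hr).mul (hpsi.hasDerivWithinAt_derivWithin hr)))
    refine h.congr_deriv ?_
    simp only [Complex.ofRealCLM_apply, Complex.ofReal_one, Pi.sub_apply, Pi.mul_apply]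
    linear_combination psi r * hphi.2 r hr - phi r * hpsi.2 r hr
  have hconst := constant_of_derivWithin_zero (fun r hr => (hW r hr).differentiableWithinAt)
    (fun r hr => (hW r (Ico_subset_Icc_self hr)).derivWithin
      (uniqueDiffOn_Icc one_pos r (Ico_subset_Icc_self hr))) 1 (by simp)
  simpa [W] using hconst

theorem eqOn_zero (h : IsRegularBesselSolution lam phi) (h1 : phi 1 = 0)
    (h1' : derivWithin phi (Icc 0 1) 1 = 0) : EqOn phi 0 (Icc 0 1) := by
  suffices hIoc : EqOn phi 0 (Ioc 0 1) from hIoc.of_subset_closure h.1.continuousOn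
    continuousOn_const Ioc_subset_Icc_self (by rw [closure_Ioc zero_ne_one])
  intro ε hε
  -- away from the singular point `r = 0`, `(φ, φ')` solves a linear system with bounded
  -- coefficients
  set v : ℝ → ℂ × ℂ → ℂ × ℂ := fun t p => (p.2, -(t : ℂ)⁻¹ * p.2 + -lam ^ 2 * p.1)
  have hv : ∀ t ∈ Ioc ε 1,
      LipschitzOnWith (max 1 (‖(ε : ℂ)⁻¹‖₊ + ‖-lam ^ 2‖₊)) (v t) univ := by
    intro t ht
    have hlip : LipschitzWith _ (v t) := LipschitzWith.prod_snd.prodMk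
      (((lipschitzWith_smul (-(t : ℂ)⁻¹)).comp LipschitzWith.prod_snd).add
        ((lipschitzWith_smul (-lam ^ 2)).comp LipschitzWith.prod_fst))
    refine (hlip.weaken ?_).lipschitzOnWith
    have ht0 : 0 < t := hε.1.trans ht.1
    have hinv : ‖-(t : ℂ)⁻¹‖₊ ≤ ‖(ε : ℂ)⁻¹‖₊ := by
      rw [← NNReal.coe_le_coe, coe_nnnorm, coe_nnnorm, norm_neg, norm_inv, norm_inv,
        Complex.norm_real, Complex.norm_real, Real.norm_of_nonneg ht0.le,
        Real.norm_of_nonneg hε.1.le]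
      exact inv_anti₀ hε.1 ht.1.le
    simp only [mul_one]
    gcongr
  have hsol := ODE_solution_unique_of_mem_Icc_left (v := v) (s := fun _ => univ)
    (f := fun t => (phi t, derivWithin phi (Icc 0 1) t)) (g := 0) hv ?_ ?_ (fun _ _ => trivial)
    continuousOn_const
    (fun t _ => (hasDerivWithinAt_const t (Iic t) 0).congr_deriv (by ext <;> simp [v]))
    (fun _ _ => trivial) (by simp [h1, h1'])
  · exact congrArg Prod.fst (hsol ⟨le_rfl, hε.2⟩)
  · have hsub : Icc ε 1 ⊆ Icc 0 1 := Icc_subset_Icc_left hε.1.le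
    exact (h.1.continuousOn.mono hsub).prodMk (h.contDiffOn_derivWithin.continuousOn.mono hsub)
  · intro t ht
    have ht0 : 0 < t := hε.1.trans ht.1
    have hderiv := ((h.hasDerivWithinAt ⟨ht0.le, ht.2⟩).prodMk
      (h.hasDerivWithinAt_derivWithin ⟨ht0.le, ht.2⟩)).mono_of_mem_nhdsWithin
        (Icc_mem_nhdsLE_of_mem ⟨ht0, ht.2⟩)
    refine hderiv.congr_deriv (Prod.ext rfl ?_)
    have ht0' : (t : ℂ) ≠ 0 := by exact_mod_cast ht0.ne'
    simp only [v]
    field_simp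
    linear_combination h.2 t ⟨ht0.le, ht.2⟩

end IsRegularBesselSolution

theorem integral_sq_mul_derivWithin {phi : ℝ → ℂ} (hphi : ContDiffOn ℝ 1 phi (Icc 0 1)) :
    ∫ r in (0:ℝ)..1, (r : ℂ) ^ 2 * derivWithin phi (Icc 0 1) r
      = phi 1 - 2 * ∫ r in (0:ℝ)..1, (r : ℂ) * phi r := by
  have hI : uIcc (0:ℝ) 1 = Icc 0 1 := uIcc_of_le zero_le_one
  have hsq (r : ℝ) : HasDerivAt (fun s : ℝ => (s : ℂ) ^ 2) (2 * r) r := by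
    simpa using (hasDerivAt_pow 2 (r : ℂ)).comp_ofReal
  have hparts := intervalIntegral.integral_mul_deriv_eq_deriv_mul_of_hasDerivWithinAt
    (fun r _ => (hsq r).hasDerivWithinAt)
    (fun r hr => by
      rw [hI] at hr ⊢
      exact (hphi.differentiableOn one_ne_zero r hr).hasDerivWithinAt)
    ((by fun_prop : Continuous fun s : ℝ => 2 * (s : ℂ)).intervalIntegrable 0 1)
    ((hphi.continuousOn_derivWithin (uniqueDiffOn_Icc one_pos) le_rfl).intervalIntegrable_of_Icc
      zero_le_one)
  simp_rw [mul_assoc, intervalIntegral.integral_const_mul] at hparts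
  simpa using hparts

theorem integral_ofReal_mul_const_mul_sub {phi : ℝ → ℂ} (hphi : ContinuousOn phi (Icc 0 1))
    (c d : ℂ) :
    ∫ r in (0:ℝ)..1, (r : ℂ) * (c * phi r - d)
      = c * (∫ r in (0:ℝ)..1, (r : ℂ) * phi r) - d / 2 := by
  have hint : IntervalIntegrable (fun r : ℝ => (r : ℂ) * phi r) MeasureTheory.volume 0 1 :=
    (Complex.continuous_ofReal.continuousOn.mul hphi).intervalIntegrable_of_Icc zero_le_one
  simp_rw [mul_sub, mul_left_comm _ c]
  rw [intervalIntegral.integral_sub (hint.const_mul c)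
      ((by fun_prop : Continuous fun r : ℝ => (r : ℂ) * d).intervalIntegrable 0 1),
    intervalIntegral.integral_const_mul, intervalIntegral.integral_mul_const,
    intervalIntegral.integral_ofReal, integral_id]
  push_cast
  ring

section Reduction

variable {β₀ γ₀ : ℝ} {lam : ℂ}

theorem IsEigenvalueK.exists_isRegularBesselSolution (hβ₀ : β₀ ≠ 0)
    (h : IsEigenvalueK β₀ γ₀ lam) :
    ∃ (η : ℂ) (phi : ℝ → ℂ), IsRegularBesselSolution lam phi ∧
      derivWithin phi (Icc 0 1) 1 = -(lam * η) ∧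
      lam * phi 1 = ((γ₀ : ℂ) - β₀ * lam ^ 2) * η ∧
      ¬(η = 0 ∧ EqOn phi 0 (Icc 0 1)) := by
  obtain ⟨η, ω, phi, zeta, hphi, -, h₁, h₂, h₃, h₄, h₅, h₆, hne⟩ := h
  have hparts := integral_sq_mul_derivWithin (hphi.of_le one_le_two)
  have hzeta : ∫ r in (0:ℝ)..1, (r : ℂ) * zeta r
      = lam * (∫ r in (0:ℝ)..1, (r : ℂ) * phi r) - 2 * η / 2 := by
    rw [← integral_ofReal_mul_const_mul_sub hphi.continuousOn]
    refine intervalIntegral.integral_congr fun r hr => ?_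
    rw [uIcc_of_le zero_le_one] at hr
    simp only [← h₃ r hr]
    ring
  have hω : ω = β₀ * (lam * η) + ∫ r in (0:ℝ)..1, (r : ℂ) ^ 2 * derivWithin phi (Icc 0 1) r := by
    have hβ : (β₀ : ℂ) ≠ 0 := by exact_mod_cast hβ₀
    rw [← h₁]; field_simp; ring
  refine ⟨η, phi, ⟨hphi, fun r hr => ?_⟩, by linear_combination h₆ - h₁, ?_, ?_⟩
  · rcases hr.1.eq_or_lt with rfl | hr0
    · simpa using h₅
    have hrr : (r : ℂ) * (r : ℂ)⁻¹ = 1 := mul_inv_cancel₀ (by exact_mod_cast hr0.ne')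
    linear_combination (-(r : ℂ)) * h₄ r ⟨hr0, hr.2⟩ - derivWithin phi (Icc 0 1) r * hrr
      - 2 * r * h₁ - r * lam * h₃ r hr
  · linear_combination -h₂ - 2 * hzeta - lam * hω - lam * hparts
  · rintro ⟨rfl, hphi0⟩
    have hP : ∫ r in (0:ℝ)..1, (r : ℂ) * phi r = 0 := by
      rw [intervalIntegral.integral_congr (g := fun _ => 0) fun r hr => ?_]
      · simp
      · rw [uIcc_of_le zero_le_one] at hr
        simp [hphi0 hr]
    have hphi1 : phi 1 = 0 := hphi0 ⟨zero_le_one, le_rfl⟩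
    refine hne ⟨rfl, by linear_combination hω + hparts + hphi1 - 2 * hP, hphi0, fun r hr => ?_⟩
    have hphir : phi r = 0 := hphi0 hr
    linear_combination h₃ r hr + lam * hphir

theorem IsRegularBesselSolution.isEigenvalueK (hβ₀ : β₀ ≠ 0) {η : ℂ} {phi : ℝ → ℂ}
    (hphi : IsRegularBesselSolution lam phi) (hd1 : derivWithin phi (Icc 0 1) 1 = -(lam * η))
    (hbc : lam * phi 1 = ((γ₀ : ℂ) - β₀ * lam ^ 2) * η) (hne : ¬(η = 0 ∧ EqOn phi 0 (Icc 0 1))) :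
    IsEigenvalueK β₀ γ₀ lam := by
  have hββ : (β₀ : ℂ)⁻¹ * β₀ = 1 := inv_mul_cancel₀ (by exact_mod_cast hβ₀)
  refine ⟨η, β₀ * (lam * η) + ∫ r in (0:ℝ)..1, (r : ℂ) ^ 2 * derivWithin phi (Icc 0 1) r, phi,
    fun r => lam * phi r - 2 * η, hphi.1,
    ((contDiffOn_const.mul hphi.1).sub contDiffOn_const).of_le one_le_two, ?_, ?_,
    fun r _ => by ring, fun r hr => ?_, by simpa using hphi.2 0 ⟨le_rfl, zero_le_one⟩, ?_,
    fun ⟨hη, _, hphi0, _⟩ => hne ⟨hη, hphi0⟩⟩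
  · linear_combination lam * η * hββ
  · rw [integral_ofReal_mul_const_mul_sub hphi.1.continuousOn,
      integral_sq_mul_derivWithin (hphi.1.of_le one_le_two)]
    linear_combination -hbc
  · have hrr : (r : ℂ)⁻¹ * r = 1 := inv_mul_cancel₀ (by exact_mod_cast hr.1.ne')
    linear_combination (-(r : ℂ)⁻¹) * hphi.2 r ⟨hr.1.le, hr.2⟩ - 2 * lam * η * hββ
      + (derivWithin (derivWithin phi (Icc 0 1)) (Icc 0 1) r + lam ^ 2 * phi r) * hrr
  · linear_combination hd1 + lam * η * hββ

theorem isEigenvalueK_iff (hβ₀ : β₀ ≠ 0) :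
    IsEigenvalueK β₀ γ₀ lam ↔ ∃ (η : ℂ) (phi : ℝ → ℂ), IsRegularBesselSolution lam phi ∧
      derivWithin phi (Icc 0 1) 1 = -(lam * η) ∧
      lam * phi 1 = ((γ₀ : ℂ) - β₀ * lam ^ 2) * η ∧
      ¬(η = 0 ∧ EqOn phi 0 (Icc 0 1)) :=
  ⟨IsEigenvalueK.exists_isRegularBesselSolution hβ₀,
    fun ⟨_, _, hphi, hd1, hbc, hne⟩ => hphi.isEigenvalueK hβ₀ hd1 hbc hne⟩

end Reduction

/-- A complex number `λ` is an eigenvalue of the linearised operator `K` if and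
only if `λ J₀(λ) = (γ₀ − β₀ λ²) J₁(λ)`, where `γ₀ = α₀ − β₀`. -/
theorem eigenvalue_iff_besselJ (β₀ α₀ : ℝ) (hβ₀ : 0 < β₀) (lam : ℂ) :
    IsEigenvalueK β₀ (α₀ - β₀) lam ↔
      lam * besselJ 0 lam = (((α₀ - β₀ : ℝ) : ℂ) - (β₀ : ℂ) * lam ^ 2) * besselJ 1 lam := by
  have hJ := isRegularBesselSolution_besselJ_zero lam
  have hJ1 : derivWithin (fun r : ℝ => besselJ 0 (lam * r)) (Icc 0 1) 1
      = -(lam * besselJ 1 lam) := by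
    simpa using derivWithin_besselJ_zero_const_mul lam (right_mem_Icc.2 zero_le_one)
  rw [isEigenvalueK_iff hβ₀.ne']
  constructor
  · rintro ⟨η, phi, hphi, hd1, hbc, hne⟩
    have hW := hphi.wronskian_eq_zero hJ
    simp only [hd1, hJ1, Complex.ofReal_one, mul_one] at hW
    by_cases hη : η = 0
    · obtain rfl | hlam := eq_or_ne lam 0
      · simp [besselJ_one_zero]
      · refine absurd ⟨hη, hphi.eqOn_zero ?_ (by simp [hd1, hη])⟩ hne
        simpa [hη, hlam] using hbc
    · refine mul_left_cancel₀ hη ?_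
      linear_combination -hW + besselJ 1 lam * hbc
  · intro h
    refine ⟨besselJ 1 lam, _, hJ, hJ1, by simpa using h, fun ⟨_, h0⟩ => ?_⟩
    simpa [besselJ_zero_zero] using h0 (left_mem_Icc.2 zero_le_one)
end
end

section
/- Define g : (0, ∞) → ℝ by g(λ) = (λ⁻¹ − λ/sinh²λ)/(coth λ − λ⁻¹). Then g is strictly decreasing on (0, ∞), g(λ) → 1 as λ → 0⁺ and g(λ) → 0 as λ → ∞. Consequently, for every α₀ > 6 the equation g(λ) = 6/α₀ has a unique solution λ⋆(α₀) ∈ (0, ∞). (For the Langevin magnetisation law with parameter λ one has m₁′(1) = g(λ), so λ⋆(α₀) is the unique parameter value at which α₀ m₁′(1) = 6.) -/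
/-!
Put `t = 2λ`. Multiplying numerator and denominator by `4λ sinh² λ` and doubling the angle,
`g(λ) = N(t) / D(t)` with `N t = 2 cosh t - 2 - t²` and `D t = t sinh t - 2 cosh t + 2`,
in which no products of hyperbolic functions remain. Everything then follows from the power
series: `N'D - ND' = ∑ ((n-1)(n-2)(n-3) + 8 - 2ⁿ) tⁿ / n!` over odd `n ≥ 3`, whose
coefficients vanish for `n ≤ 7` and are negative from `n = 9` on, so `N / D` is strictly
decreasing. Both `N` and `D` start with `t⁴/12` while
`D - N = O(t⁶)`, which gives the limit `1` at `0`; for `t ≥ 2`, `(t - 2) N ≤ 2 D`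
since `cosh t - sinh t ≤ 1`, which gives the limit `0` at infinity.
The intermediate value theorem and strict monotonicity then give existence and uniqueness
of `λ⋆`.
-/

open Filter Topology Set

noncomputable section

/-- `g(λ) = (λ⁻¹ − λ/sinh²λ)/(coth λ − λ⁻¹)`, the value of `m₁′(1)` for the
Langevin magnetisation law with parameter `λ`. -/
def langevinDeriv (x : ℝ) : ℝ :=
  (x⁻¹ - x / (Real.sinh x) ^ 2) / (Real.cosh x / Real.sinh x - x⁻¹)

/-- The Langevin magnetisation law with parameter `λ > 0`. -/
def langevinLaw (lam s : ℝ) : ℝ :=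
  (Real.cosh (lam * s) / Real.sinh (lam * s) - (lam * s)⁻¹) /
    (Real.cosh lam / Real.sinh lam - lam⁻¹)

open Real
open scoped Nat

theorem StrictAntiOn.existsUnique_eq_of_tendsto {f : ℝ → ℝ} {c a b y : ℝ}
    (hf : StrictAntiOn f (Ioi c)) (hcont : ContinuousOn f (Ioi c))
    (hc : Tendsto f (𝓝[>] c) (𝓝 a)) (htop : Tendsto f atTop (𝓝 b)) (hy : y ∈ Ioo b a) :
    ∃! x, x ∈ Ioi c ∧ f x = y := by
  obtain ⟨x, hx, rfl⟩ := isPreconnected_Ioi.intermediate_value_Ioo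
    (le_principal_iff.2 (Ioi_mem_atTop c)) (le_principal_iff.2 self_mem_nhdsWithin) hcont htop hc hy
  exact ⟨x, ⟨hx, rfl⟩, fun x' hx' => hf.injOn hx'.1 hx hx'.2⟩

theorem two_mul_mul_add_eight_le_two_pow (k : ℕ) :
    2 * k * (2 * k + 1) * (2 * k + 2) + 8 ≤ 2 ^ (2 * k + 3) := by
  induction k with
  | zero => norm_num
  | succ k ih =>
    have hk : k ≤ k * k := Nat.le_mul_self k
    have hk' : k * k ≤ k * (k * k) := Nat.mul_le_mul_left k hk
    rw [show 2 ^ (2 * (k + 1) + 3) = 4 * 2 ^ (2 * k + 3) by ring]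
    nlinarith

namespace Real

theorem hasSum_cosh_sub_one (t : ℝ) :
    HasSum (fun k : ℕ => t ^ (2 * k + 2) / (2 * k + 2)!) (cosh t - 1) := by
  simpa [mul_add] using (hasSum_nat_add_iff' 1).2 (hasSum_cosh t)

theorem hasSum_cosh_sub_one_sub_sq_div_two (t : ℝ) :
    HasSum (fun k : ℕ => t ^ (2 * k + 4) / (2 * k + 4)!) (cosh t - 1 - t ^ 2 / 2) := by
  simpa [mul_add, add_assoc] using (hasSum_nat_add_iff' 1).2 (hasSum_cosh_sub_one t)

theorem hasSum_sinh_sub_self (t : ℝ) :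
    HasSum (fun k : ℕ => t ^ (2 * k + 3) / (2 * k + 3)!) (sinh t - t) := by
  simpa [mul_add, add_assoc] using (hasSum_nat_add_iff' 1).2 (hasSum_sinh t)

theorem hasDerivAt_cosh_div_sinh_sub_inv {u : ℝ} (hu : u ≠ 0) :
    HasDerivAt (fun u => cosh u / sinh u - u⁻¹) ((u ^ 2)⁻¹ - (sinh u ^ 2)⁻¹) u := by
  have hs : sinh u ≠ 0 := sinh_eq_zero.not.2 hu
  refine (((hasDerivAt_cosh u).div (hasDerivAt_sinh u) hs).sub (hasDerivAt_inv hu)).congr_deriv ?_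
  field_simp
  linear_combination (-(u ^ 2)) * cosh_sq u

end Real

namespace Langevin

def num (t : ℝ) : ℝ := 2 * cosh t - 2 - t ^ 2

def den (t : ℝ) : ℝ := t * sinh t - 2 * cosh t + 2

theorem hasSum_num (t : ℝ) :
    HasSum (fun k : ℕ => 2 * t ^ (2 * k + 4) / (2 * k + 4)!) (num t) := by
  have h := (hasSum_cosh_sub_one_sub_sq_div_two t).mul_left 2
  rw [show 2 * (cosh t - 1 - t ^ 2 / 2) = num t by unfold num; ring] at h
  exact h.congr_fun fun k => by ring

theorem hasSum_den (t : ℝ) :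
    HasSum (fun k : ℕ => (2 * k + 2) * t ^ (2 * k + 4) / (2 * k + 4)!) (den t) := by
  have h := ((hasSum_sinh_sub_self t).mul_left t).sub
    ((hasSum_cosh_sub_one_sub_sq_div_two t).mul_left 2)
  rw [show t * (sinh t - t) - 2 * (cosh t - 1 - t ^ 2 / 2) = den t by unfold den; ring] at h
  refine h.congr_fun fun k => ?_
  rw [show 2 * k + 4 = 2 * k + 3 + 1 by ring, Nat.factorial_succ]
  have : ((2 * k + 3)! : ℝ) ≠ 0 := by positivity
  push_cast
  field_simp
  ring

theorem hasSum_den_sub_num (t : ℝ) :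
    HasSum (fun k : ℕ => 2 * k * t ^ (2 * k + 4) / (2 * k + 4)!) (den t - num t) :=
  ((hasSum_den t).sub (hasSum_num t)).congr_fun fun k => by ring

theorem hasSum_deriv_num_mul_den_sub (t : ℝ) :
    HasSum (fun k : ℕ => (2 * k * (2 * k + 1) * (2 * k + 2) + 8 - 2 ^ (2 * k + 3) : ℝ) *
      t ^ (2 * k + 3) / (2 * k + 3)!)
      ((2 * sinh t - 2 * t) * den t - num t * (t * cosh t - sinh t)) := by
  have h := (((((hasSum_cosh t).mul_left (t ^ 3)).add
    ((hasSum_cosh_sub_one t).mul_left (6 * t))).sub ((hasSum_sinh t).mul_left (3 * t ^ 2))).add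
    ((hasSum_sinh_sub_self t).mul_left 2)).sub (hasSum_sinh_sub_self (2 * t))
  rw [show t ^ 3 * cosh t + 6 * t * (cosh t - 1) - 3 * t ^ 2 * sinh t + 2 * (sinh t - t)
      - (sinh (2 * t) - 2 * t) = (2 * sinh t - 2 * t) * den t - num t * (t * cosh t - sinh t) by
    unfold num den; rw [sinh_two_mul]; linear_combination (2 * t) * cosh_sq t] at h
  refine h.congr_fun fun k => ?_
  rw [show 2 * k + 3 = 2 * k + 2 + 1 by ring, show 2 * k + 2 = 2 * k + 1 + 1 by ring,
    Nat.factorial_succ, Nat.factorial_succ, Nat.factorial_succ]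
  have : ((2 * k)! : ℝ) ≠ 0 := by positivity
  push_cast
  field_simp
  ring

theorem hasDerivAt_num (t : ℝ) : HasDerivAt num (2 * sinh t - 2 * t) t := by
  refine ((((hasDerivAt_cosh t).const_mul 2).sub_const 2).sub (hasDerivAt_pow 2 t)).congr_deriv ?_
  norm_num

theorem hasDerivAt_den (t : ℝ) : HasDerivAt den (t * cosh t - sinh t) t := by
  refine ((((hasDerivAt_id t).mul (hasDerivAt_sinh t)).sub
    ((hasDerivAt_cosh t).const_mul 2)).add_const 2).congr_deriv ?_
  simp only [id]; ring

theorem pow_four_div_twelve_le_den (t : ℝ) : t ^ 4 / 12 ≤ den t := by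
  have h := le_hasSum (hasSum_den t) 0 fun k _ => by
    have : 0 ≤ t ^ (2 * k + 4) := Even.pow_nonneg ⟨k + 2, by ring⟩ t
    positivity
  norm_num [Nat.factorial] at h
  linarith

theorem den_pos {t : ℝ} (ht : t ≠ 0) : 0 < den t :=
  (by positivity : 0 < t ^ 4 / 12).trans_le (pow_four_div_twelve_le_den t)

theorem num_nonneg (t : ℝ) : 0 ≤ num t :=
  (hasSum_num t).nonneg fun k => by
    have : 0 ≤ t ^ (2 * k + 4) := Even.pow_nonneg ⟨k + 2, by ring⟩ t
    positivity

theorem den_sub_num_nonneg (t : ℝ) : 0 ≤ den t - num t :=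
  (hasSum_den_sub_num t).nonneg fun k => by
    have : 0 ≤ t ^ (2 * k + 4) := Even.pow_nonneg ⟨k + 2, by ring⟩ t
    positivity

theorem den_sub_num_le {t : ℝ} (h₀ : 0 ≤ t) (h₁ : t ≤ 1) :
    den t - num t ≤ t ^ 6 * (den 1 - num 1) := by
  refine hasSum_le (fun k => ?_) (hasSum_den_sub_num t) ((hasSum_den_sub_num 1).mul_left _)
  rcases k with _ | k
  · simp
  · have : t ^ (2 * (k + 1) + 4) ≤ t ^ 6 := pow_le_pow_of_le_one h₀ h₁ (by omega)
    rw [one_pow, ← mul_div_assoc, mul_one, mul_comm (t ^ 6)]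
    gcongr

theorem deriv_num_mul_den_sub_neg {t : ℝ} (ht : 0 < t) :
    (2 * sinh t - 2 * t) * den t - num t * (t * cosh t - sinh t) < 0 := by
  refine hasSum_lt (i := 3) (fun k => ?_) ?_ (hasSum_deriv_num_mul_den_sub t) hasSum_zero
  · have hk : (2 * k * (2 * k + 1) * (2 * k + 2) + 8 - 2 ^ (2 * k + 3) : ℝ) ≤ 0 := by
      rw [sub_nonpos]
      exact_mod_cast two_mul_mul_add_eight_le_two_pow k
    exact div_nonpos_of_nonpos_of_nonneg (mul_nonpos_of_nonpos_of_nonneg hk (by positivity))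
      (by positivity)
  · have : 0 < t ^ 9 := by positivity
    norm_num
    linarith

theorem strictAntiOn_num_div_den : StrictAntiOn (fun t => num t / den t) (Ioi 0) := by
  have hderiv (t : ℝ) (ht : t ∈ Ioi 0) : HasDerivAt (fun t => num t / den t)
      (((2 * sinh t - 2 * t) * den t - num t * (t * cosh t - sinh t)) / den t ^ 2) t :=
    (hasDerivAt_num t).div (hasDerivAt_den t) (den_pos ht.ne').ne'
  refine strictAntiOn_of_deriv_neg (convex_Ioi 0)
    (fun t ht => (hderiv t ht).continuousAt.continuousWithinAt) fun t ht => ?_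
  rw [interior_Ioi] at ht
  rw [(hderiv t ht).deriv]
  exact div_neg_of_neg_of_pos (deriv_num_mul_den_sub_neg ht) (pow_pos (den_pos ht.ne') 2)

theorem tendsto_num_div_den_nhdsGT_zero :
    Tendsto (fun t => num t / den t) (𝓝[>] 0) (𝓝 1) := by
  have hbound : Tendsto (fun t : ℝ => 12 * (den 1 - num 1) * t ^ 2) (𝓝[>] 0) (𝓝 0) :=
    ((continuous_const.mul (continuous_pow 2)).tendsto' 0 0 (by simp)).mono_left
      nhdsWithin_le_nhds
  have hrel : Tendsto (fun t => (den t - num t) / den t) (𝓝[>] 0) (𝓝 0) := by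
    refine tendsto_of_tendsto_of_tendsto_of_le_of_le' tendsto_const_nhds hbound ?_ ?_
    · filter_upwards [self_mem_nhdsWithin] with t ht
      exact div_nonneg (den_sub_num_nonneg t) (den_pos (ne_of_gt ht)).le
    · filter_upwards [Ioo_mem_nhdsGT one_pos] with t ht
      rw [div_le_iff₀ (den_pos ht.1.ne')]
      calc den t - num t ≤ t ^ 6 * (den 1 - num 1) := den_sub_num_le ht.1.le ht.2.le
        _ = 12 * (den 1 - num 1) * t ^ 2 * (t ^ 4 / 12) := by ring
        _ ≤ 12 * (den 1 - num 1) * t ^ 2 * den t :=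
          mul_le_mul_of_nonneg_left (pow_four_div_twelve_le_den t)
            (mul_nonneg (mul_nonneg (by norm_num) (den_sub_num_nonneg 1)) (sq_nonneg t))
  have h1 : Tendsto (fun t => 1 - (den t - num t) / den t) (𝓝[>] 0) (𝓝 1) := by
    simpa using (tendsto_const_nhds (x := (1 : ℝ))).sub hrel
  refine h1.congr' ?_
  filter_upwards [self_mem_nhdsWithin] with t ht
  field_simp [(den_pos (ne_of_gt ht)).ne']
  ring

theorem num_div_den_le {t : ℝ} (ht : 2 < t) : num t / den t ≤ 2 / (t - 2) := by
  rw [div_le_div_iff₀ (den_pos (by linarith)) (by linarith)]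
  have he : cosh t - sinh t ≤ 1 := by rw [cosh_sub_sinh, exp_le_one_iff]; linarith
  have h0 : 0 ≤ t := by linarith
  unfold num den
  nlinarith [mul_nonneg h0 (sub_nonneg.2 he), mul_nonneg h0 (mul_nonneg h0 (sub_nonneg.2 ht.le))]

theorem tendsto_num_div_den_atTop : Tendsto (fun t => num t / den t) atTop (𝓝 0) := by
  have hsub : Tendsto (fun t : ℝ => t - 2) atTop atTop := by
    simpa only [sub_eq_add_neg, id_eq] using tendsto_atTop_add_const_right atTop (-2) tendsto_id
  have hbound : Tendsto (fun t : ℝ => 2 / (t - 2)) atTop (𝓝 0) :=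
    tendsto_const_nhds.div_atTop hsub
  refine tendsto_of_tendsto_of_tendsto_of_le_of_le' tendsto_const_nhds hbound ?_ ?_
  · filter_upwards [eventually_gt_atTop 0] with t ht
    exact div_nonneg (num_nonneg t) (den_pos ht.ne').le
  · filter_upwards [eventually_gt_atTop 2] with t ht
    exact num_div_den_le ht

end Langevin

-- At `x = 0` both sides are the junk value `0 / 0 = 0`.
open Langevin in
theorem langevinDeriv_eq_num_div_den : langevinDeriv = fun x => num (2 * x) / den (2 * x) := by
  ext x
  rcases eq_or_ne x 0 with rfl | hx
  · simp [langevinDeriv, num, den]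
  have hs : sinh x ≠ 0 := sinh_eq_zero.not.2 hx
  have hc : 4 * x * sinh x ^ 2 ≠ 0 := by positivity
  rw [langevinDeriv, ← div_div_div_cancel_right₀ hc (num _)]
  congr 1
  · unfold num
    rw [cosh_two_mul]
    field_simp
    linear_combination (-2) * cosh_sq x
  · unfold den
    rw [cosh_two_mul, sinh_two_mul]
    field_simp
    linear_combination 2 * cosh_sq x

theorem strictAntiOn_langevinDeriv : StrictAntiOn langevinDeriv (Ioi 0) := by
  rw [langevinDeriv_eq_num_div_den]
  exact Langevin.strictAntiOn_num_div_den.comp_strictMonoOn (f := fun x => 2 * x)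
    (fun _ _ _ _ h => by linarith) fun x (hx : 0 < x) => show 0 < 2 * x by positivity

theorem continuousOn_langevinDeriv : ContinuousOn langevinDeriv (Ioi 0) := by
  rw [langevinDeriv_eq_num_div_den]
  refine ContinuousOn.div (by unfold Langevin.num; fun_prop) (by unfold Langevin.den; fun_prop)
    fun x hx => (Langevin.den_pos ?_).ne'
  exact mul_ne_zero two_ne_zero (ne_of_gt hx)

theorem tendsto_langevinDeriv_nhdsGT_zero : Tendsto langevinDeriv (𝓝[>] 0) (𝓝 1) := by
  have h2 : Tendsto (fun x : ℝ => 2 * x) (𝓝[>] 0) (𝓝[>] 0) := by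
    refine tendsto_nhdsWithin_iff.2 ⟨?_, ?_⟩
    · simpa using ((continuous_const_mul (2 : ℝ)).tendsto 0).mono_left nhdsWithin_le_nhds
    · filter_upwards [self_mem_nhdsWithin] with x (hx : 0 < x)
      exact show 0 < 2 * x by positivity
  rw [langevinDeriv_eq_num_div_den]
  exact Langevin.tendsto_num_div_den_nhdsGT_zero.comp h2

theorem tendsto_langevinDeriv_atTop : Tendsto langevinDeriv atTop (𝓝 0) := by
  rw [langevinDeriv_eq_num_div_den]
  exact Langevin.tendsto_num_div_den_atTop.comp (tendsto_id.const_mul_atTop two_pos)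

theorem hasDerivAt_langevinLaw_one {lam : ℝ} (hlam : lam ≠ 0) :
    HasDerivAt (langevinLaw lam) (langevinDeriv lam) 1 := by
  have hlin : HasDerivAt (fun s => lam * s) lam 1 := by
    simpa using (hasDerivAt_id (1 : ℝ)).const_mul lam
  have h := ((hasDerivAt_cosh_div_sinh_sub_inv (by simpa using hlam)).comp 1 hlin).div_const
    (cosh lam / sinh lam - lam⁻¹)
  rw [mul_one] at h
  refine h.congr_deriv ?_
  have hs : sinh lam ≠ 0 := sinh_eq_zero.not.2 hlam
  rw [langevinDeriv]
  field_simp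

/-- `g` is strictly decreasing on `(0, ∞)` with `g(0⁺) = 1` and `g(∞) = 0`;
consequently, for every `α₀ > 6` the equation `g(λ) = 6/α₀` has a unique solution
`λ⋆(α₀) ∈ (0, ∞)`. For the Langevin law one has `m₁′(1) = g(λ)`, so `λ⋆(α₀)` is
the unique parameter value at which `α₀ m₁′(1) = 6`. -/
theorem langevin_critical_parameter :
    StrictAntiOn langevinDeriv (Set.Ioi 0) ∧
    Tendsto langevinDeriv (nhdsWithin 0 (Set.Ioi 0)) (𝓝 1) ∧
    Tendsto langevinDeriv atTop (𝓝 0) ∧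
    (∀ α₀ : ℝ, 6 < α₀ →
      ∃! lam : ℝ, lam ∈ Set.Ioi (0:ℝ) ∧ langevinDeriv lam = 6 / α₀) ∧
    (∀ lam : ℝ, 0 < lam → deriv (langevinLaw lam) 1 = langevinDeriv lam) := by
  refine ⟨strictAntiOn_langevinDeriv, tendsto_langevinDeriv_nhdsGT_zero,
    tendsto_langevinDeriv_atTop, fun α₀ hα₀ => ?_,
    fun lam hlam => (hasDerivAt_langevinLaw_one hlam.ne').deriv⟩
  have hα₀' : 0 < α₀ := by linarith
  exact strictAntiOn_langevinDeriv.existsUnique_eq_of_tendsto continuousOn_langevinDeriv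
    tendsto_langevinDeriv_nhdsGT_zero tendsto_langevinDeriv_atTop
    ⟨by positivity, (div_lt_one hα₀').2 hα₀⟩
end
end
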